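/- Let M be a countable coarse group satisfying the negative-expression axiom and such that the product of full filters is associative. Then for every full filter x and every *subgroup V of M, there is a left *coset A ∈ LC(V) such that the left coset x·V̂ = {x·y : y ∈ V̂} of V̂ in the group F(M) equals Â. -/
import Mathlib


/-! Abstract coarse groups (Nies–Schlicht–Tent). -/

namespace CoarsePaper

/-- A structure with one ternary relation `rel A B C`, read "AB ⊑ C". -/
structure CG (M : Type) : Type where
  rel : M → M → M → Prop

variable {M : Type}

/-- `U` is a *subgroup: `UU ⊑ U`. -/
def IsSub (c : CG M) (U : M) : Prop := c.rel U U U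

/-- For *subgroups, `U ⊑ V` means `UV ⊑ V`. -/
def sle (c : CG M) (U V : M) : Prop := c.rel U V V

/-- `A ∈ LC(U)`: `U` is the ⊑-maximum *subgroup with `AU ⊑ A`. -/
def LC (c : CG M) (U A : M) : Prop :=
  IsSub c U ∧ c.rel A U A ∧ ∀ V, IsSub c V → c.rel A V A → sle c V U

/-- `A ∈ RC(U)`: `U` is the ⊑-maximum *subgroup with `UA ⊑ A`. -/
def RC (c : CG M) (U A : M) : Prop :=
  IsSub c U ∧ c.rel U A A ∧ ∀ V, IsSub c V → c.rel V A A → sle c V U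

/-- `A ⊑ B` for arbitrary elements: `AU ⊑ B` for some *subgroup `U` with `A ∈ LC(U)`. -/
def cle (c : CG M) (A B : M) : Prop := ∃ U, LC c U A ∧ c.rel A U B

/-- `A`, `B` are disjoint: there are no `C`, `D` with `CD ⊑ A` and `CD ⊑ B`. -/
def Disj (c : CG M) (A B : M) : Prop := ¬ ∃ C D, c.rel C D A ∧ c.rel C D B

/-- `S(A,B)`: there is a *subgroup `V` with `A ∈ RC(V)`, `B ∈ LC(V)`, `AB ⊑ V`;
we then write `B = A⋄`. -/
def Srel (c : CG M) (A B : M) : Prop :=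
  ∃ V, RC c V A ∧ LC c V B ∧ c.rel A B V

/-- The axioms of a coarse group. -/
structure Axioms (c : CG M) : Prop where
  -- (0a) ⊑ is a partial order on *subgroups in which any two elements have a meet
  sle_refl : ∀ U, IsSub c U → sle c U U
  sle_antisymm : ∀ U V, IsSub c U → IsSub c V → sle c U V → sle c V U → U = V
  sle_trans : ∀ U V W, IsSub c U → IsSub c V → IsSub c W → sle c U V → sle c V W → sle c U W
  meet : ∀ U V, IsSub c U → IsSub c V → ∃ W, IsSub c W ∧ sle c W U ∧ sle c W V ∧
    ∀ T, IsSub c T → sle c T U → sle c T V → sle c T W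
  -- (0b) every element is a left *coset and a right *coset of some *subgroup
  exists_lc : ∀ A, ∃ U, LC c U A
  exists_rc : ∀ A, ∃ U, RC c U A
  -- (0c) ⊑ is a partial order on M extending ⊑ on *subgroups
  cle_refl : ∀ A, cle c A A
  cle_antisymm : ∀ A B, cle c A B → cle c B A → A = B
  cle_trans : ∀ A B C, cle c A B → cle c B C → cle c A C
  cle_ext : ∀ U V, IsSub c U → IsSub c V → (cle c U V ↔ sle c U V)
  -- (1)
  lc_up : ∀ U' U A', IsSub c U' → IsSub c U → sle c U' U → LC c U' A' →
    ∃ A, LC c U A ∧ cle c A' A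
  lc_disj : ∀ U' U A' A, IsSub c U' → IsSub c U → sle c U' U → LC c U' A' → LC c U A →
    cle c A' A ∨ Disj c A' A
  rc_up : ∀ U' U A', IsSub c U' → IsSub c U → sle c U' U → RC c U' A' →
    ∃ A, RC c U A ∧ cle c A' A
  rc_disj : ∀ U' U A' A, IsSub c U' → IsSub c U → sle c U' U → RC c U' A' → RC c U A →
    cle c A' A ∨ Disj c A' A
  -- (2) monotonicity
  mono : ∀ A₀ A₁ B₀ B₁ C, c.rel B₀ B₁ C → cle c A₀ B₀ → cle c A₁ B₁ → c.rel A₀ A₁ C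
  -- (3)
  lc_sub_iff : ∀ U V B, IsSub c U → IsSub c V → LC c V B →
    (sle c U V ↔ ∃ A, LC c U A ∧ cle c A B)
  rc_sub_iff : ∀ U V B, IsSub c U → IsSub c V → RC c V B →
    (sle c U V ↔ ∃ A, RC c U A ∧ cle c A B)
  -- (4) inverses
  srel_existsUnique : ∀ A, ∃! B, Srel c A B
  srel_symm : ∀ A B, Srel c A B → Srel c B A
  srel_orderIso : ∀ A B A' B', Srel c A A' → Srel c B B' → (cle c A B ↔ cle c A' B')
  -- (5) products of compatible *cosets
  prod_exists : ∀ U V W A B, RC c U A → LC c V A → RC c V B → LC c W B →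
    ∃ C, RC c U C ∧ LC c W C ∧ c.rel A B C ∧ ∀ D, c.rel A B D → cle c C D

/-- A full filter on `M`. -/
structure FullFilter (c : CG M) (x : Set M) : Prop where
  up : ∀ A ∈ x, ∀ B, cle c A B → B ∈ x
  directed : ∀ A ∈ x, ∀ B ∈ x, ∃ C ∈ x, cle c C A ∧ cle c C B
  lc_mem : ∀ U, IsSub c U → ∃ A ∈ x, LC c U A
  rc_mem : ∀ U, IsSub c U → ∃ A ∈ x, RC c U A

/-- The product of two filters: `x·y = {C : ∃ A ∈ x, B ∈ y, AB ⊑ C}`. -/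
def fprod (c : CG M) (x y : Set M) : Set M :=
  {C | ∃ A ∈ x, ∃ B ∈ y, c.rel A B C}

/-- The inverse of a filter: `x⁻¹ = {A⋄ : A ∈ x}`. -/
def finv (c : CG M) (x : Set M) : Set M :=
  {B | ∃ A ∈ x, Srel c A B}

/-- The identity filter: generated by the *subgroups. -/
def fone (c : CG M) : Set M := {C | ∃ U, IsSub c U ∧ cle c U C}

/-- The space `F(M)` of full filters on `M`. -/
abbrev FF (c : CG M) : Type := {x : Set M // FullFilter c x}

/-- The topology on `F(M)` generated by the sets `Â = {x : A ∈ x}`. -/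
def ffTop (c : CG M) : TopologicalSpace (FF c) :=
  TopologicalSpace.generateFrom {S | ∃ A : M, S = {x : FF c | A ∈ x.1}}

/-- `Â`, as a collection of subsets of `M`: the full filters containing `A`. -/
def hatS (c : CG M) (A : M) : Set (Set M) := {x | FullFilter c x ∧ A ∈ x}

/-- Associativity of the product of full filters. -/
def FAssoc (c : CG M) : Prop :=
  ∀ x y z : Set M, FullFilter c x → FullFilter c y → FullFilter c z →
    fprod c (fprod c x y) z = fprod c x (fprod c y z)

/-- The negative-expression axiom. -/
structure NegAx (c : CG M) : Prop where
  rel_iff : ∀ A B C, c.rel A B C ↔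
    ¬ ∃ D E F, cle c D A ∧ cle c E B ∧ c.rel D E F ∧ Disj c C F
  le_iff : ∀ A B, cle c A B ↔ ¬ ∃ C, cle c C A ∧ Disj c B C

/-- The action of a filter on a *coset: `x·A = B` iff `SA ⊑ B` for some `S ∈ x`. -/
def act (c : CG M) (x : Set M) (A B : M) : Prop := ∃ S ∈ x, c.rel S A B

/-- `𝒱 ⊆ F(M)` is a subgroup of the filter group `F(M)`. -/
def IsSubgroupFF (c : CG M) (V : Set (FF c)) : Prop :=
  (∀ z : FF c, z.1 = fone c → z ∈ V) ∧
  (∀ u ∈ V, ∀ v ∈ V, ∀ w : FF c, w.1 = fprod c u.1 v.1 → w ∈ V) ∧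
  (∀ u ∈ V, ∀ w : FF c, w.1 = finv c u.1 → w ∈ V)

/-- The union of double cosets `⋃_{i<n} V̂·Â_i`, as a collection of subsets of `M`
(the underlying sets of the full filters belonging to it). -/
def doubleUnion (c : CG M) (V : M) {n : ℕ} (A : Fin n → M) : Set (Set M) :=
  {z | ∃ i : Fin n, ∃ u v : Set M, FullFilter c u ∧ FullFilter c v ∧ V ∈ u ∧ A i ∈ v ∧
    z = fprod c u v}

/-- The coset-recognition axiom. -/
def CosetRec (c : CG M) : Prop :=
  ∀ V, IsSub c V → ∀ n : ℕ, 1 ≤ n → ∀ A : Fin n → M, (∀ i, LC c V (A i)) →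
    (fone c ∈ doubleUnion c V A ∧
     (∀ p ∈ doubleUnion c V A, ∀ q ∈ doubleUnion c V A, fprod c p q ∈ doubleUnion c V A) ∧
     (∀ p ∈ doubleUnion c V A, finv c p ∈ doubleUnion c V A)) →
    ∃ U, IsSub c U ∧ (∀ i, c.rel V (A i) U) ∧
      ∀ z : Set M, FullFilter c z → U ∈ z → z ∈ doubleUnion c V A

/-- Roelcke precompactness of the filter group `F(M)`: every open neighbourhood `𝒰` of the
identity satisfies `F(M) = 𝒰·F·𝒰` for some finite `F`. -/
def RoelckeFF (c : CG M) : Prop :=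
  ∀ U : Set (FF c), @IsOpen (FF c) (ffTop c) U → (∀ z : FF c, z.1 = fone c → z ∈ U) →
    ∃ F : Set (FF c), F.Finite ∧
      ∀ z : FF c, ∃ u ∈ U, ∃ f ∈ F, ∃ v ∈ U, z.1 = fprod c (fprod c u.1 f.1) v.1


section AuxLemmas

variable {c : CG M}

lemma lc_unique (ax : Axioms c) {U U' A : M} (h : LC c U A) (h' : LC c U' A) : U = U' :=
  ax.sle_antisymm U U' h.1 h'.1 (h'.2.2 U h.1 h.2.1) (h.2.2 U' h'.1 h'.2.1)

lemma rc_unique (ax : Axioms c) {U U' A : M} (h : RC c U A) (h' : RC c U' A) : U = U' :=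
  ax.sle_antisymm U U' h.1 h'.1 (h'.2.2 U h.1 h.2.1) (h.2.2 U' h'.1 h'.2.1)

lemma subgroup_rc (ax : Axioms c) {S : M} (hS : IsSub c S) : RC c S S := by
  obtain ⟨S₂, hS₂⟩ := ax.exists_rc S
  exact ⟨hS, hS, fun V hV h => ax.sle_trans V S₂ S hV hS₂.1 hS (hS₂.2.2 V hV h) hS₂.2.1⟩

lemma srel_exists (ax : Axioms c) (A : M) : ∃ B, Srel c A B := (ax.srel_existsUnique A).exists

lemma srel_unique (ax : Axioms c) {A B B' : M} (h : Srel c A B) (h' : Srel c A B') : B = B' :=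
  (ax.srel_existsUnique A).unique h h'

lemma subgroup_lc (ax : Axioms c) {S : M} (hS : IsSub c S) : LC c S S := by
  obtain ⟨Sb, hSb⟩ := ax.exists_lc S
  obtain ⟨X, hX⟩ := srel_exists ax S
  obtain ⟨V', hV'S, hV'X, hrel⟩ := hX
  have hVeq : V' = S := rc_unique ax hV'S (subgroup_rc ax hS)
  subst hVeq
  obtain ⟨V'', hV''X, hV''S, hrel2⟩ := ax.srel_symm V' X ⟨V', hV'S, hV'X, hrel⟩
  have hVeq2 : V'' = Sb := lc_unique ax hV''S hSb
  subst hVeq2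
  obtain ⟨K, hKrc, hKlc, hKrel, hKleast⟩ := ax.prod_exists V' V'' V' V' X hV'S hV''S hV''X hV'X
  have hKS : cle c K V' := hKleast V' hrel
  have hSK : Srel c V' K := ⟨V', hV'S, hKlc, ax.mono V' K V' V' V' hS (ax.cle_refl V') hKS⟩
  have hXK : X = K := srel_unique ax ⟨V', hV'S, hV'X, hrel⟩ hSK
  subst hXK
  have : V'' = V' := rc_unique ax hV''X hKrc
  exact this ▸ hV''S

lemma shrink (ax : Axioms c) (P Q : M) :
    ∃ W P' Q', IsSub c W ∧ LC c W P' ∧ RC c W Q' ∧ cle c P' P ∧ cle c Q' Q := by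
  obtain ⟨V₁, hV₁⟩ := ax.exists_lc P
  obtain ⟨V₂, hV₂⟩ := ax.exists_rc Q
  obtain ⟨W, hW, hW1, hW2, -⟩ := ax.meet V₁ V₂ hV₁.1 hV₂.1
  obtain ⟨P', hP'⟩ := (ax.lc_sub_iff W V₁ P hW hV₁.1 hV₁).1 hW1
  obtain ⟨Q', hQ'⟩ := (ax.rc_sub_iff W V₂ Q hW hV₂.1 hV₂).1 hW2
  exact ⟨W, P', Q', hW, hP'.1, hQ'.1, hP'.2, hQ'.2⟩

lemma prod_min (ax : Axioms c) {W P Q : M} (hP : LC c W P) (hQ : RC c W Q) :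
    ∃ G, c.rel P Q G ∧ ∀ D, c.rel P Q D → cle c G D := by
  obtain ⟨U₀, hU₀⟩ := ax.exists_rc P
  obtain ⟨W₀, hW₀⟩ := ax.exists_lc Q
  obtain ⟨G, -, -, h1, h2⟩ := ax.prod_exists U₀ W W₀ P Q hU₀ hP hQ hW₀
  exact ⟨G, h1, h2⟩

lemma rel_up (ax : Axioms c) (nax : NegAx c) {P Q C C' : M}
    (h : c.rel P Q C) (hCC' : cle c C C') : c.rel P Q C' := by
  rw [nax.rel_iff]
  rintro ⟨D, E, F, hD, hE, hDEF, hdisj⟩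
  have h1 : c.rel D E C := ax.mono D E P Q C h hD hE
  obtain ⟨W, D', E', hW, hLC, hRC, hD', hE'⟩ := shrink ax D E
  have h2 : c.rel D' E' C := ax.mono D' E' D E C h1 hD' hE'
  have h3 : c.rel D' E' F := ax.mono D' E' D E F hDEF hD' hE'
  obtain ⟨G, hG, hGmin⟩ := prod_min ax hLC hRC
  have hGC' : cle c G C' := ax.cle_trans G C C' (hGmin C h2) hCC'
  obtain ⟨T, hT, hTF⟩ := hGmin F h3
  obtain ⟨T', hT', hT'C'⟩ := hGC'
  have hTT : T' = T := lc_unique ax hT' hT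
  exact hdisj ⟨G, T, hTT ▸ hT'C', hTF⟩

lemma rc_act_le (ax : Axioms c) (nax : NegAx c) {U B C : M}
    (hU : IsSub c U) (hB : RC c U B) (h : c.rel U B C) : cle c B C := by
  rw [nax.le_iff]
  rintro ⟨C₂, hC₂B, hdisj⟩
  obtain ⟨W₂, hW₂⟩ := ax.exists_rc C₂
  have hsle : sle c W₂ U := (ax.rc_sub_iff W₂ U B hW₂.1 hU hB).2 ⟨C₂, hW₂, hC₂B⟩
  have h1 : c.rel W₂ C₂ C := ax.mono W₂ C₂ U B C h ((ax.cle_ext W₂ U hW₂.1 hU).2 hsle) hC₂B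
  exact hdisj ⟨W₂, C₂, h1, hW₂.2.1⟩

lemma not_disj_of_lb (ax : Axioms c) {C A B : M} (h1 : cle c C A) (h2 : cle c C B) :
    ¬ Disj c A B := by
  obtain ⟨T, hT, hTA⟩ := h1
  obtain ⟨T', hT', hTB⟩ := h2
  have hTT : T' = T := lc_unique ax hT' hT
  exact fun hd => hd ⟨C, T, hTA, hTT ▸ hTB⟩

lemma filter_lc_mono (ax : Axioms c) {x : Set M} (hx : FullFilter c x) {W V A B : M}
    (hA : A ∈ x) (hB : B ∈ x) (hLA : LC c W A) (hLB : LC c V B) (hWV : sle c W V) :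
    cle c A B := by
  obtain ⟨C, hC, hCA, hCB⟩ := hx.directed A hA B hB
  rcases ax.lc_disj W V A B hLA.1 hLB.1 hWV hLA hLB with h | h
  · exact h
  · exact absurd h (not_disj_of_lb ax hCA hCB)

lemma filter_rc_mono (ax : Axioms c) {x : Set M} (hx : FullFilter c x) {W V A B : M}
    (hA : A ∈ x) (hB : B ∈ x) (hRA : RC c W A) (hRB : RC c V B) (hWV : sle c W V) :
    cle c A B := by
  obtain ⟨C, hC, hCA, hCB⟩ := hx.directed A hA B hB
  rcases ax.rc_disj W V A B hRA.1 hRB.1 hWV hRA hRB with h | h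
  · exact h
  · exact absurd h (not_disj_of_lb ax hCA hCB)

lemma fprod_full (ax : Axioms c) (nax : NegAx c) {x y : Set M}
    (hx : FullFilter c x) (hy : FullFilter c y) : FullFilter c (fprod c x y) := by
  constructor
  · rintro C ⟨A, hA, B, hB, h⟩ D hCD
    exact ⟨A, hA, B, hB, rel_up ax nax h hCD⟩
  · rintro C₁ ⟨A₁, hA₁, B₁, hB₁, h₁⟩ C₂ ⟨A₂, hA₂, B₂, hB₂, h₂⟩
    obtain ⟨A₃, hA₃, hA₃1, hA₃2⟩ := hx.directed A₁ hA₁ A₂ hA₂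
    obtain ⟨B₃, hB₃, hB₃1, hB₃2⟩ := hy.directed B₁ hB₁ B₂ hB₂
    obtain ⟨V₁, hV₁⟩ := ax.exists_lc A₃
    obtain ⟨V₂, hV₂⟩ := ax.exists_rc B₃
    obtain ⟨W, hW, hW1, hW2, -⟩ := ax.meet V₁ V₂ hV₁.1 hV₂.1
    obtain ⟨As, hAs, hLAs⟩ := hx.lc_mem W hW
    obtain ⟨Bs, hBs, hRBs⟩ := hy.rc_mem W hW
    have hAsA₃ : cle c As A₃ := filter_lc_mono ax hx hAs hA₃ hLAs hV₁ hW1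
    have hBsB₃ : cle c Bs B₃ := filter_rc_mono ax hy hBs hB₃ hRBs hV₂ hW2
    obtain ⟨G, hG, hGmin⟩ := prod_min ax hLAs hRBs
    refine ⟨G, ⟨As, hAs, Bs, hBs, hG⟩, ?_, ?_⟩
    · exact hGmin C₁ (ax.mono As Bs A₁ B₁ C₁ h₁ (ax.cle_trans _ _ _ hAsA₃ hA₃1)
        (ax.cle_trans _ _ _ hBsB₃ hB₃1))
    · exact hGmin C₂ (ax.mono As Bs A₂ B₂ C₂ h₂ (ax.cle_trans _ _ _ hAsA₃ hA₃2)
        (ax.cle_trans _ _ _ hBsB₃ hB₃2))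
  · intro U hU
    obtain ⟨B, hB, hLB⟩ := hy.lc_mem U hU
    obtain ⟨VB, hVB⟩ := ax.exists_rc B
    obtain ⟨A, hA, hLA⟩ := hx.lc_mem VB hVB.1
    obtain ⟨U₀, hU₀⟩ := ax.exists_rc A
    obtain ⟨C, hC1, hC2, hC3, -⟩ := ax.prod_exists U₀ VB U A B hU₀ hLA hVB hLB
    exact ⟨C, ⟨A, hA, B, hB, hC3⟩, hC2⟩
  · intro U hU
    obtain ⟨A, hA, hRA⟩ := hx.rc_mem U hU
    obtain ⟨VA, hVA⟩ := ax.exists_lc A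
    obtain ⟨B, hB, hRB⟩ := hy.rc_mem VA hVA.1
    obtain ⟨W₀, hW₀⟩ := ax.exists_lc B
    obtain ⟨C, hC1, hC2, hC3, -⟩ := ax.prod_exists U VA W₀ A B hRA hVA hRB hW₀
    exact ⟨C, ⟨A, hA, B, hB, hC3⟩, hC1⟩

lemma finv_full (ax : Axioms c) {x : Set M} (hx : FullFilter c x) :
    FullFilter c (finv c x) := by
  constructor
  · rintro B ⟨A, hA, hAB⟩ B' hBB'
    obtain ⟨A', hA'⟩ := srel_exists ax B'
    have hSA : Srel c B A := ax.srel_symm A B hAB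
    have hiff := ax.srel_orderIso B B' A A' hSA hA'
    exact ⟨A', hx.up A hA A' (hiff.1 hBB'), ax.srel_symm B' A' hA'⟩
  · rintro B₁ ⟨A₁, hA₁, h₁⟩ B₂ ⟨A₂, hA₂, h₂⟩
    obtain ⟨E, hE, hE1, hE2⟩ := hx.directed A₁ hA₁ A₂ hA₂
    obtain ⟨X, hX⟩ := srel_exists ax E
    exact ⟨X, ⟨E, hE, hX⟩, (ax.srel_orderIso E A₁ X B₁ hX h₁).1 hE1,
      (ax.srel_orderIso E A₂ X B₂ hX h₂).1 hE2⟩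
  · intro U hU
    obtain ⟨A, hA, hRA⟩ := hx.rc_mem U hU
    obtain ⟨X, hX⟩ := srel_exists ax A
    obtain ⟨V', h1, h2, h3⟩ := hX
    have hVU : V' = U := rc_unique ax h1 hRA
    exact ⟨X, ⟨A, hA, ⟨V', h1, h2, h3⟩⟩, hVU ▸ h2⟩
  · intro U hU
    obtain ⟨A, hA, hLA⟩ := hx.lc_mem U hU
    obtain ⟨X, hX⟩ := srel_exists ax A
    obtain ⟨V'', h1, h2, h3⟩ := ax.srel_symm A X hX
    have hVU : V'' = U := lc_unique ax h2 hLA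
    exact ⟨X, ⟨A, hA, hX⟩, hVU ▸ h1⟩

lemma exists_sub_le_of_mem_e (ax : Axioms c) {x : Set M} (hx : FullFilter c x) {A : M}
    (hA : A ∈ fprod c x (finv c x)) : ∃ S, IsSub c S ∧ cle c S A := by
  obtain ⟨P, hP, Q', ⟨Q, hQ, hQQ'⟩, hrel⟩ := hA
  obtain ⟨E, hE, hEP, hEQ⟩ := hx.directed P hP Q hQ
  obtain ⟨X, hX⟩ := srel_exists ax E
  have hXQ' : cle c X Q' := (ax.srel_orderIso E Q X Q' hX hQQ').1 hEQ
  have hEXA : c.rel E X A := ax.mono E X P Q' A hrel hEP hXQ'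
  obtain ⟨S, hSE, hSX, hEXS⟩ := hX
  obtain ⟨V'', hV''X, hV''E, -⟩ := ax.srel_symm E X ⟨S, hSE, hSX, hEXS⟩
  obtain ⟨G, hGrc, hGlc, hG, hGmin⟩ := ax.prod_exists S V'' S E X hSE hV''E hV''X hSX
  have hGA : cle c G A := hGmin A hEXA
  have hGS : cle c G S := hGmin S hEXS
  have hS : IsSub c S := hSE.1
  rcases ax.lc_disj S S S G hS hS (ax.sle_refl S hS) (subgroup_lc ax hS) hGlc with h | h
  · exact ⟨S, hS, ax.cle_trans S G A h hGA⟩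
  · exfalso
    obtain ⟨T, hT, hTS⟩ := hGS
    have hTSeq : T = S := lc_unique ax hT hGlc
    exact h ⟨G, S, hTSeq ▸ hTS, hGlc.2.1⟩

lemma e_prod_eq (ax : Axioms c) (nax : NegAx c) {x z : Set M}
    (hx : FullFilter c x) (hz : FullFilter c z) :
    fprod c (fprod c x (finv c x)) z = z := by
  apply Set.Subset.antisymm
  · rintro C' ⟨A, hAe, B, hBz, hABC⟩
    obtain ⟨S, hS, hSA⟩ := exists_sub_le_of_mem_e ax hx hAe
    have h1 : c.rel S B C' := ax.mono S B A B C' hABC hSA (ax.cle_refl B)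
    obtain ⟨B₁, hB₁, hRB₁⟩ := hz.rc_mem S hS
    obtain ⟨B₂, hB₂, hB₂B, hB₂B₁⟩ := hz.directed B hBz B₁ hB₁
    obtain ⟨S₂, hS₂⟩ := ax.exists_rc B₂
    have hsle : sle c S₂ S := (ax.rc_sub_iff S₂ S B₁ hS₂.1 hS hRB₁).2 ⟨B₂, hS₂, hB₂B₁⟩
    have h2 : c.rel S₂ B₂ C' :=
      ax.mono S₂ B₂ S B C' h1 ((ax.cle_ext S₂ S hS₂.1 hS).2 hsle) hB₂B
    exact hz.up B₂ hB₂ C' (rc_act_le ax nax hS₂.1 hS₂ h2)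
  · intro C hC
    obtain ⟨W, hW⟩ := ax.exists_rc C
    obtain ⟨E, hE, hRE⟩ := hx.rc_mem W hW.1
    obtain ⟨X, hX⟩ := srel_exists ax E
    obtain ⟨V', h1, h2, h3⟩ := hX
    have hVW : V' = W := rc_unique ax h1 hRE
    exact ⟨W, ⟨E, hE, X, ⟨E, hE, ⟨V', h1, h2, h3⟩⟩, hVW ▸ h3⟩, C, hC, hW.2.1⟩

end AuxLemmas

/-- every left coset `x·V̂` of `V̂` in `F(M)` is of the form `Â`
for some `A ∈ LC(V)`. -/
theorem stmt12 (c : CG M) [Countable M] (ax : Axioms c) (nax : NegAx c) (hassoc : FAssoc c)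
    (x : Set M) (hx : FullFilter c x) (V : M) (hV : IsSub c V) :
    ∃ A, LC c V A ∧ {z | ∃ y ∈ hatS c V, z = fprod c x y} = hatS c A := by
  obtain ⟨A, hAx, hLCA⟩ := hx.lc_mem V hV
  refine ⟨A, hLCA, ?_⟩
  ext z
  constructor
  · rintro ⟨y, ⟨hyFF, hVy⟩, rfl⟩
    exact ⟨fprod_full ax nax hx hyFF, ⟨A, hAx, V, hVy, hLCA.2.1⟩⟩
  · rintro ⟨hzFF, hAz⟩
    have hfx := finv_full ax hx
    have hy := fprod_full ax nax hfx hzFF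
    obtain ⟨X, hX⟩ := srel_exists ax A
    obtain ⟨V'', h1, h2, h3⟩ := ax.srel_symm A X hX
    have hV'' : V'' = V := lc_unique ax h2 hLCA
    refine ⟨fprod c (finv c x) z, ⟨hy, ⟨X, ⟨A, hAx, hX⟩, A, hAz, hV'' ▸ h3⟩⟩, ?_⟩
    rw [← hassoc x (finv c x) z hx hfx hzFF, e_prod_eq ax nax hx hzFF]

end CoarsePaper
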